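/- arXiv:1812.08119 — 5 statements merged into one kernel-verified Lean document; each statement's English description precedes it below -/
import Mathlib

section
/- Under momentum-SGD with momentum μ = 1 + αλ - q√(αλ) for q > 2 and 0 < αλ < 1 satisfying 0 < μ < 1, the weight sequence satisfies |w_t| ≤ C (1 - ((q - √(q²-4))/2)√(αλ))^t |w_0| for the constant C = (q + √(q²-4))/(2√(q²-4)) + 1. -/
/-!
Eliminating the velocity turns momentum-SGD on the quadratic `λ w² / 2` into the linear
recurrence `w_{t+2} = (1 + μ - αλ) w_{t+1} - μ w_t`, whose characteristic roots are
`β, γ = 1 - ((q ∓ √(q² - 4)) / 2) √(αλ)`. Hence `w_t = (a β^t + b γ^t) w_0` with `a + b = 1`.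
The condition `μ > 0` forces `0 < γ < β ≤ 1 - αλ`, so `b ≤ 0 ≤ a`, and then
`0 ≤ a β^t + b γ^t ≤ a β^t ≤ (1 - γ) / (β - γ) · β^t = (q + √(q² - 4)) / (2√(q² - 4)) · β^t`.
-/

theorem eq_mul_pow_add_mul_pow_of_linear_recurrence {R : Type*} [CommRing R] {x : ℕ → R}
    {β γ A B : R} (hrec : ∀ t, x (t + 2) = (β + γ) * x (t + 1) - β * γ * x t)
    (hx0 : x 0 = A + B) (hx1 : x 1 = A * β + B * γ) (t : ℕ) :
    x t = A * β ^ t + B * γ ^ t := by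
  induction t using Nat.twoStepInduction with
  | zero => simpa using hx0
  | one => simpa using hx1
  | more n ih₀ ih₁ => rw [hrec, ih₀, ih₁]; ring

section Momentum

variable {R : Type*} [CommRing R] {μ c : R} {v w : ℕ → R}

theorem momentum_weight_recurrence (hv : ∀ t, v (t + 1) = μ * v t - c * w t)
    (hw : ∀ t, w (t + 1) = w t + v (t + 1)) (t : ℕ) :
    w (t + 2) = (1 + μ - c) * w (t + 1) - μ * w t := by
  have hvw : v (t + 1) = w (t + 1) - w t := by rw [hw t]; ring
  rw [hw (t + 1), hv (t + 1), hvw]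
  ring

theorem momentum_weight_one (hv0 : v 0 = 0) (hv : ∀ t, v (t + 1) = μ * v t - c * w t)
    (hw : ∀ t, w (t + 1) = w t + v (t + 1)) : w 1 = (1 - c) * w 0 := by
  rw [hw 0, hv 0, hv0]
  ring

end Momentum

theorem abs_mul_pow_add_mul_pow_le {R : Type*} [CommRing R] [LinearOrder R]
    [IsStrictOrderedRing R] {a b β γ : R} (hb : b ≤ 0) (hab : 0 ≤ a + b) (hγ : 0 ≤ γ)
    (hγβ : γ ≤ β) (t : ℕ) :
    |a * β ^ t + b * γ ^ t| ≤ a * β ^ t := by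
  have hnonneg : 0 ≤ a * β ^ t + b * γ ^ t :=
    calc 0 ≤ (a + b) * β ^ t := mul_nonneg hab (pow_nonneg (hγ.trans hγβ) t)
      _ = a * β ^ t + b * β ^ t := add_mul _ _ _
      _ ≤ a * β ^ t + b * γ ^ t := by
        gcongr a * β ^ t + ?_
        exact mul_le_mul_of_nonpos_left (pow_le_pow_left₀ hγ hγβ t) hb
  rw [abs_of_nonneg hnonneg]
  linarith [mul_nonpos_of_nonpos_of_nonneg hb (pow_nonneg hγ t)]

theorem abs_momentum_weight_le {K : Type*} [Field K] [LinearOrder K] [IsStrictOrderedRing K]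
    {μ c β γ : K} {v w : ℕ → K} (hc : 0 ≤ c)
    (hsum : β + γ = 1 + μ - c) (hprod : β * γ = μ) (hγ : 0 ≤ γ) (hγβ : γ < β)
    (hβc : β ≤ 1 - c) (hv0 : v 0 = 0) (hv : ∀ t, v (t + 1) = μ * v t - c * w t)
    (hw : ∀ t, w (t + 1) = w t + v (t + 1)) (t : ℕ) :
    |w t| ≤ (1 - γ) / (β - γ) * β ^ t * |w 0| := by
  have hβγ : 0 < β - γ := sub_pos.mpr hγβ
  have hne : β - γ ≠ 0 := hβγ.ne'
  have hab1 : (1 - c - γ) / (β - γ) + (β - (1 - c)) / (β - γ) = 1 := by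
    field_simp; ring
  have hab2 : (1 - c - γ) / (β - γ) * β + (β - (1 - c)) / (β - γ) * γ = 1 - c := by
    field_simp; ring
  set a := (1 - c - γ) / (β - γ)
  set b := (β - (1 - c)) / (β - γ)
  have hclosed : w t = a * w 0 * β ^ t + b * w 0 * γ ^ t := by
    refine eq_mul_pow_add_mul_pow_of_linear_recurrence (fun t ↦ ?_) ?_ ?_ t
    · rw [momentum_weight_recurrence hv hw, hsum, hprod]
    · linear_combination (-w 0) * hab1
    · rw [momentum_weight_one hv0 hv hw]; linear_combination (-w 0) * hab2
  have hb : b ≤ 0 := div_nonpos_of_nonpos_of_nonneg (by linarith) hβγ.le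
  have hab : 0 ≤ a + b := by rw [← add_div]; exact div_nonneg (by linarith) hβγ.le
  have ha : a ≤ (1 - γ) / (β - γ) := div_le_div_of_nonneg_right (by linarith) hβγ.le
  calc |w t| = |a * β ^ t + b * γ ^ t| * |w 0| := by rw [hclosed, ← abs_mul]; ring_nf
    _ ≤ a * β ^ t * |w 0| := by gcongr; exact abs_mul_pow_add_mul_pow_le hb hab hγ hγβ.le t
    _ ≤ (1 - γ) / (β - γ) * β ^ t * |w 0| := by
      gcongr; exact pow_nonneg (hγ.trans hγβ.le) t

theorem msgd_weight_decay_rate_general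
    (α lam q : ℝ)
    (h0 : 0 < α * lam) (h1 : α * lam < 1) (hq : 2 < q)
    (μ : ℝ) (hμdef : μ = 1 + α * lam - q * Real.sqrt (α * lam))
    (hμ0 : 0 < μ)
    (v w : ℕ → ℝ) (hv0 : v 0 = 0)
    (hv : ∀ t : ℕ, v (t + 1) = μ * v t - α * lam * w t)
    (hw : ∀ t : ℕ, w (t + 1) = w t + v (t + 1)) :
    ∀ t : ℕ,
      |w t| ≤ ((q + Real.sqrt (q ^ 2 - 4)) / (2 * Real.sqrt (q ^ 2 - 4)) + 1)
        * (1 - (q - Real.sqrt (q ^ 2 - 4)) / 2 * Real.sqrt (α * lam)) ^ t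
        * |w 0| := by
  intro t
  set s := Real.sqrt (α * lam)
  set d := Real.sqrt (q ^ 2 - 4)
  have hs0 : 0 < s := Real.sqrt_pos.mpr h0
  have hs2 : s ^ 2 = α * lam := Real.sq_sqrt h0.le
  have hs1 : s < 1 := (Real.sqrt_lt' one_pos).mpr (by rwa [one_pow])
  have hd0 : 0 < d := Real.sqrt_pos.mpr (by nlinarith)
  have hd2 : d ^ 2 = q ^ 2 - 4 := Real.sq_sqrt (by nlinarith)
  -- `μ = ((q - d) / 2 - s) ((q + d) / 2 - s)` and the second factor exceeds `1 - s > 0`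
  have hsd : s < (q - d) / 2 := by nlinarith
  set β := 1 - (q - d) / 2 * s with hβ_def
  set γ := 1 - (q + d) / 2 * s with hγ_def
  have hγ : 0 < γ := by nlinarith [mul_lt_mul_of_pos_left hsd (by positivity : 0 < (q + d) / 2)]
  have hγβ : γ < β := by nlinarith [mul_pos hd0 hs0]
  have hC : (1 - γ) / (β - γ) = (q + d) / (2 * d) := by
    rw [div_eq_div_iff (by nlinarith) (by positivity)]
    ring
  have hsum : β + γ = 1 + μ - α * lam := by rw [hμdef]; ring
  have hprod : β * γ = μ := by rw [hμdef]; linear_combination (-s ^ 2 / 4) * hd2 + hs2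
  calc |w t| ≤ (1 - γ) / (β - γ) * β ^ t * |w 0| :=
        abs_momentum_weight_le h0.le hsum hprod hγ.le hγβ
          (by nlinarith [mul_lt_mul_of_pos_left hsd hs0]) hv0 hv hw t
    _ ≤ _ := by
        rw [hC]
        gcongr
        · exact pow_nonneg (hγ.le.trans hγβ.le) t
        · linarith

/-- Momentum-SGD with momentum μ = 1 + αλ - q√(αλ), q > 2, 0 < αλ < 1, 0 < μ < 1,
applied to the weight-decay gradient g_t = λw_t, satisfies
|w_t| ≤ C (1 - ((q - √(q²-4))/2)√(αλ))^t |w_0| with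
C = (q + √(q²-4))/(2√(q²-4)) + 1. -/
theorem msgd_weight_decay_rate
    (α lam q : ℝ) (hα : 0 < α) (hlam : 0 < lam)
    (h0 : 0 < α * lam) (h1 : α * lam < 1) (hq : 2 < q)
    (μ : ℝ) (hμdef : μ = 1 + α * lam - q * Real.sqrt (α * lam))
    (hμ0 : 0 < μ) (hμ1 : μ < 1)
    (v w : ℕ → ℝ) (hv0 : v 0 = 0)
    (hv : ∀ t : ℕ, v (t + 1) = μ * v t - α * lam * w t)
    (hw : ∀ t : ℕ, w (t + 1) = w t + v (t + 1)) :
    ∀ t : ℕ,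
      |w t| ≤ ((q + Real.sqrt (q ^ 2 - 4)) / (2 * Real.sqrt (q ^ 2 - 4)) + 1)
        * (1 - (q - Real.sqrt (q ^ 2 - 4)) / 2 * Real.sqrt (α * lam)) ^ t
        * |w 0| :=
  msgd_weight_decay_rate_general α lam q h0 h1 hq μ hμdef hμ0 v w hv0 hv hw
end

section
/- Under Adam-style weight-decay dynamics, the per-step change satisfies |w_t - w_{t-1}| ≤ α/√(1-β₂) =: ν′, provided β₁ ≤ β₂; hence if w_{t-1} > ν′ then w_t > 0. -/
/-!
By weighted Cauchy–Schwarz and the geometric series,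
`(∑ β₁^(t-i) w_i)² ≤ (1 - β₁)⁻¹ ∑ β₁^(t-i) w_i²`, and the right-hand sum is at most
`v_t = ∑ β₂^(t-i) w_i²` because `β₁ ≤ β₂`. Hence `(1 - β₁) |m_t| ≤ √(v_t + ε)`, so the step
`ν |m_t| / √(v_t + ε)` is at most `α / √(1 - β₂)`.
-/

open Finset

lemma sum_range_pow_sub_le {β : ℝ} (hβ0 : 0 ≤ β) (hβ1 : β < 1) (t : ℕ) :
    ∑ i ∈ range (t + 1), β ^ (t - i) ≤ (1 - β)⁻¹ := by
  calc ∑ i ∈ range (t + 1), β ^ (t - i) = ∑ i ∈ Ico 0 (t + 1), β ^ i := by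
        rw [← range_eq_Ico, ← sum_range_reflect]
        exact sum_congr rfl fun i hi => by
          rw [Nat.add_sub_cancel, Nat.sub_sub_self (Nat.lt_succ_iff.mp (mem_range.mp hi))]
    _ ≤ β ^ 0 / (1 - β) := geom_sum_Ico_le_of_lt_one hβ0 hβ1
    _ = (1 - β)⁻¹ := by rw [pow_zero, one_div]

lemma one_sub_mul_sq_sum_range_pow_sub_mul_le {β : ℝ} (hβ0 : 0 ≤ β) (hβ1 : β < 1)
    (x : ℕ → ℝ) (t : ℕ) :
    (1 - β) * (∑ i ∈ range (t + 1), β ^ (t - i) * x i) ^ 2 ≤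
      ∑ i ∈ range (t + 1), β ^ (t - i) * x i ^ 2 := by
  have hpos : 0 < 1 - β := sub_pos.2 hβ1
  have hCS : (∑ i ∈ range (t + 1), β ^ (t - i) * x i) ^ 2 ≤
      (∑ i ∈ range (t + 1), β ^ (t - i)) * ∑ i ∈ range (t + 1), β ^ (t - i) * x i ^ 2 :=
    sum_sq_le_sum_mul_sum_of_sq_le_mul _ (fun i _ => by positivity) (fun i _ => by positivity)
      fun i _ => le_of_eq (by ring)
  calc (1 - β) * (∑ i ∈ range (t + 1), β ^ (t - i) * x i) ^ 2
      ≤ (1 - β) * ((1 - β)⁻¹ * ∑ i ∈ range (t + 1), β ^ (t - i) * x i ^ 2) := by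
        refine mul_le_mul_of_nonneg_left (hCS.trans ?_) hpos.le
        exact mul_le_mul_of_nonneg_right (sum_range_pow_sub_le hβ0 hβ1 t)
          (sum_nonneg fun i _ => by positivity)
    _ = ∑ i ∈ range (t + 1), β ^ (t - i) * x i ^ 2 := by field_simp

lemma one_sub_mul_abs_sum_range_pow_sub_mul_le_sqrt {β₁ β₂ ε : ℝ} (hβ₁0 : 0 ≤ β₁)
    (hβ₁₂ : β₁ ≤ β₂) (hβ₁1 : β₁ < 1) (hε : 0 ≤ ε) (x : ℕ → ℝ) (t : ℕ) :
    (1 - β₁) * |∑ i ∈ range (t + 1), β₁ ^ (t - i) * x i| ≤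
      √((∑ i ∈ range (t + 1), β₂ ^ (t - i) * x i ^ 2) + ε) := by
  refine Real.le_sqrt_of_sq_le ?_
  calc ((1 - β₁) * |∑ i ∈ range (t + 1), β₁ ^ (t - i) * x i|) ^ 2
      = (1 - β₁) * ((1 - β₁) * (∑ i ∈ range (t + 1), β₁ ^ (t - i) * x i) ^ 2) := by
        rw [mul_pow, sq_abs]; ring
    _ ≤ 1 * ∑ i ∈ range (t + 1), β₁ ^ (t - i) * x i ^ 2 :=
        mul_le_mul (by linarith) (one_sub_mul_sq_sum_range_pow_sub_mul_le hβ₁0 hβ₁1 x t)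
          (mul_nonneg (sub_pos.2 hβ₁1).le (sq_nonneg _)) zero_le_one
    _ ≤ (∑ i ∈ range (t + 1), β₂ ^ (t - i) * x i ^ 2) + ε := by
        rw [one_mul]
        exact (sum_le_sum fun i _ => by gcongr).trans (le_add_of_nonneg_right hε)

lemma abs_mul_mul_div_le {c k m s : ℝ} (hc : 0 ≤ c) (hk : 0 ≤ k) (h : k * |m| ≤ s) :
    |c * k * m / s| ≤ c := by
  rw [abs_div, abs_mul, abs_mul, abs_of_nonneg hc, abs_of_nonneg hk, mul_assoc]
  exact div_le_of_le_mul₀ (abs_nonneg s) hc (by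
    rw [abs_of_nonneg ((mul_nonneg hk (abs_nonneg m)).trans h)]
    exact mul_le_mul_of_nonneg_left h hc)

/-- Adam-style weight-decay dynamics: the per-step change is bounded by
ν′ = α/√(1-β₂) (given β₁ ≤ β₂), hence if w_t > ν′ then w_{t+1} > 0. -/
theorem adam_step_bounded
    (α β₁ β₂ ε : ℝ) (hα : 0 < α) (hβ₁0 : 0 < β₁) (hβ₁₂ : β₁ ≤ β₂)
    (hβ₂1 : β₂ < 1) (hε : 0 < ε) (w : ℕ → ℝ)
    (hw : ∀ t : ℕ, w (t + 1) = w t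
        - (α * (1 - β₁) / Real.sqrt (1 - β₂))
          * (∑ i ∈ Finset.range (t + 1), β₁ ^ (t - i) * w i)
          / Real.sqrt ((∑ i ∈ Finset.range (t + 1), β₂ ^ (t - i) * (w i) ^ 2) + ε)) :
    ∀ t : ℕ,
      |w (t + 1) - w t| ≤ α / Real.sqrt (1 - β₂) ∧
      (w t > α / Real.sqrt (1 - β₂) → w (t + 1) > 0) := by
  intro t
  have hβ₁1 : β₁ < 1 := hβ₁₂.trans_lt hβ₂1
  have hstep : |w (t + 1) - w t| ≤ α / √(1 - β₂) := by
    rw [hw t, sub_sub_cancel_left, abs_neg, mul_div_right_comm α]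
    exact abs_mul_mul_div_le (by positivity) (sub_pos.2 hβ₁1).le
      (one_sub_mul_abs_sum_range_pow_sub_mul_le_sqrt hβ₁0.le hβ₁₂ hβ₁1 hε.le w t)
  exact ⟨hstep, fun hwt => by linarith [(abs_le.mp hstep).1]⟩
end

section
/- Suppose the Adam weight-decay sequence satisfies w_{t'} > δ ≥ ν′ for all 1 ≤ t' ≤ t, with w_0 > 0. Then w_t ≤ w_{t-1}(1 - ν/√(v_t + ε)), and in particular the sequence w_0, w_1, …, w_t is strictly decreasing. -/
/-! Every weight up to time `t` is positive (it exceeds `δ ≥ ν′ > 0`), so the first moment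
`m_{τ+1} = ∑ β₁^{τ-i} w_i` is at least its last term `w_τ`. Hence the Adam step subtracts at
least `ν w_τ / √(v_{τ+1} + ε)`, a positive quantity. -/

open Finset

theorem pos_of_forall_lt_of_nonneg {w : ℕ → ℝ} {δ : ℝ} {t : ℕ} (hδ : 0 ≤ δ) (hw0 : 0 < w 0)
    (hbig : ∀ τ : ℕ, 1 ≤ τ → τ ≤ t → δ < w τ) {i : ℕ} (hi : i ≤ t) : 0 < w i := by
  rcases Nat.eq_zero_or_pos i with rfl | hi0
  · exact hw0
  · exact hδ.trans_lt (hbig i hi0 hi)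

theorem le_sum_range_pow_mul {β : ℝ} (hβ : 0 ≤ β) {w : ℕ → ℝ} {τ : ℕ}
    (hw : ∀ i ≤ τ, 0 ≤ w i) : w τ ≤ ∑ i ∈ range (τ + 1), β ^ (τ - i) * w i := by
  have hle := single_le_sum (f := fun i => β ^ (τ - i) * w i)
    (fun i hi => mul_nonneg (pow_nonneg hβ _) (hw i (Nat.lt_succ_iff.mp (mem_range.mp hi))))
    (self_mem_range_succ τ)
  simpa using hle

theorem sub_mul_div_le_mul_one_sub_div {x m ν S : ℝ} (hν : 0 ≤ ν) (hS : 0 ≤ S) (hxm : x ≤ m) :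
    x - ν * m / S ≤ x * (1 - ν / S) := by
  have : ν * x / S ≤ ν * m / S := by gcongr
  linarith [show x * (1 - ν / S) = x - ν * x / S by ring]

/-- If the Adam weight-decay sequence stays above δ ≥ ν′ = α/√(1-β₂) up to time t
(with w 0 > 0), then w_{τ+1} ≤ w_τ (1 - ν/√(v_{τ+1} + ε)) and the sequence is
strictly decreasing up to time t. -/
theorem adam_strictly_decreasing
    (α β₁ β₂ ε δ : ℝ) (hα : 0 < α) (hβ₁0 : 0 < β₁) (hβ₁₂ : β₁ ≤ β₂)
    (hβ₂1 : β₂ < 1) (hε : 0 < ε) (w : ℕ → ℝ)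
    (hw : ∀ τ : ℕ, w (τ + 1) = w τ
        - (α * (1 - β₁) / Real.sqrt (1 - β₂))
          * (∑ i ∈ Finset.range (τ + 1), β₁ ^ (τ - i) * w i)
          / Real.sqrt ((∑ i ∈ Finset.range (τ + 1), β₂ ^ (τ - i) * (w i) ^ 2) + ε))
    (hw0 : 0 < w 0) (hδ : α / Real.sqrt (1 - β₂) ≤ δ)
    (t : ℕ) (hbig : ∀ τ : ℕ, 1 ≤ τ → τ ≤ t → δ < w τ) :
    ∀ τ : ℕ, τ < t →
      w (τ + 1) ≤ w τ * (1 - (α * (1 - β₁) / Real.sqrt (1 - β₂))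
          / Real.sqrt ((∑ i ∈ Finset.range (τ + 1), β₂ ^ (τ - i) * (w i) ^ 2) + ε))
      ∧ w (τ + 1) < w τ := by
  intro τ hτ
  have hβ₂0 : 0 < β₂ := hβ₁0.trans_le hβ₁₂
  have hβ₁1 : 0 < 1 - β₁ := by linarith
  have hsqrt : 0 < √(1 - β₂) := Real.sqrt_pos.2 (by linarith)
  have hν : 0 < α * (1 - β₁) / √(1 - β₂) := by positivity
  have hwpos : ∀ i ≤ t, 0 < w i :=
    fun i => pos_of_forall_lt_of_nonneg ((div_pos hα hsqrt).le.trans hδ) hw0 hbig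
  have hS : 0 < √((∑ i ∈ range (τ + 1), β₂ ^ (τ - i) * (w i) ^ 2) + ε) :=
    Real.sqrt_pos.2 (by positivity)
  have hm := le_sum_range_pow_mul (τ := τ) hβ₁0.le (fun i hi => (hwpos i (by omega)).le)
  have hbound := sub_mul_div_le_mul_one_sub_div hν.le hS.le hm
  have hfactor : w τ * (1 - α * (1 - β₁) / √(1 - β₂) / √((∑ i ∈ range (τ + 1),
      β₂ ^ (τ - i) * (w i) ^ 2) + ε)) < w τ :=
    mul_lt_of_lt_one_right (hwpos τ hτ.le) (sub_lt_self 1 (div_pos hν hS))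
  rw [hw τ]
  exact ⟨hbound, hbound.trans_lt hfactor⟩
end

section
/- Suppose a positive sequence satisfies w_{τ+1} ≤ w_τ (1 - ν/√((1/2)^k w_0² + ε)) whenever kτ* ≤ τ ≤ (k+1)τ*, and ε ≤ (1/2)^k w_0² for the relevant values of k. Then w_{τ+1} ≤ exp(-τ*·(ν/w_0)·(2^{(τ/τ*)/2 - 1} - 1)) · w_0, i.e., w_τ decays doubly exponentially, as O(exp(-2^{cτ})) for some c > 0. -/
/-!
Since `ε ≤ (1/2)^k w₀²`, on block `k` the denominator satisfies
`√((1/2)^k w₀² + ε) ≤ √2 · w₀ / √2^k`, so each step contracts by at least `1 - (ν/w₀) √2^(k-1)`,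
which is at most `exp (-(ν/w₀) √2^(k-1))`. Multiplying up to step `τ`, the `K = ⌊τ/τ*⌋` complete
blocks alone contribute `τ* (ν/w₀) ∑_{k<K} √2^(k-1) ≥ τ* (ν/w₀) (√2^(K-1) - 1)` to the exponent,
and `2^((τ/τ*)/2 - 1) ≤ √2^(K-1)` because `τ/τ* < K + 1`.
-/

open Finset Real

theorem Finset.sum_range_mul_comp_div {M : Type*} [AddCommMonoid M] (f : ℕ → M) (m : ℕ)
    {n : ℕ} (hn : 0 < n) :
    ∑ i ∈ range (m * n), f (i / n) = n • ∑ k ∈ range m, f k := by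
  induction m with
  | zero => simp
  | succ m ih =>
    have hblock : ∀ j ∈ range n, f ((m * n + j) / n) = f m := fun j hj => by
      rw [add_comm, Nat.add_mul_div_right _ _ hn, Nat.div_eq_of_lt (mem_range.mp hj), zero_add]
    rw [Nat.succ_mul, sum_range_add, ih, sum_congr rfl hblock, sum_const, card_range,
      sum_range_succ, smul_add]

theorem pow_sub_one_le_geom_sum {s : ℝ} (h1 : 1 ≤ s) (h2 : s ≤ 2) (K : ℕ) :
    s ^ K - 1 ≤ ∑ k ∈ range K, s ^ k := by
  have hsum : 0 ≤ ∑ k ∈ range K, s ^ k := sum_nonneg fun k _ => by positivity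
  rw [← geom_sum_mul]
  nlinarith

theorem le_mul_exp_neg_sum {u x : ℕ → ℝ} (n : ℕ)
    (h : ∀ t ≤ n, u (t + 1) ≤ u t * exp (-x t)) :
    u (n + 1) ≤ u 0 * exp (-∑ i ∈ range (n + 1), x i) := by
  induction n with
  | zero => simpa using h 0 le_rfl
  | succ n ih =>
    calc u (n + 2) ≤ u (n + 1) * exp (-x (n + 1)) := h (n + 1) le_rfl
      _ ≤ u 0 * exp (-∑ i ∈ range (n + 1), x i) * exp (-x (n + 1)) := by
          gcongr; exact ih fun t ht => h t (by omega)
      _ = u 0 * exp (-∑ i ∈ range (n + 2), x i) := by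
          rw [mul_assoc, ← exp_add, sum_range_succ _ (n + 1), neg_add]

theorem le_mul_exp_neg_of_le_mul_one_sub {u v a c : ℝ} (hv : 0 ≤ v) (hca : c ≤ a)
    (h : u ≤ v * (1 - a)) : u ≤ v * exp (-c) :=
  h.trans (by gcongr; linarith [add_one_le_exp (-c)])

theorem two_rpow_le_sqrt_two_pow_div (n : ℕ) {m : ℕ} (hm : 0 < m) :
    (2 : ℝ) ^ (((n : ℝ) / m) / 2 - 1) ≤ √2 ^ (n / m) / √2 := by
  have hlt : (n : ℝ) / m < (n / m : ℕ) + 1 := by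
    rw [div_lt_iff₀ (by exact_mod_cast hm)]
    have := Nat.lt_div_mul_add (a := n) hm
    rw [add_one_mul]
    exact_mod_cast this
  have hrpow : √2 ^ (n / m) / √2 = (2 : ℝ) ^ (((n / m : ℕ) : ℝ) / 2 - 1 / 2) := by
    rw [sqrt_eq_rpow, ← rpow_natCast, ← rpow_mul zero_le_two, ← rpow_sub two_pos]
    ring_nf
  rw [hrpow]
  exact rpow_le_rpow_of_exponent_le one_le_two (by linarith)

theorem mul_sqrt_two_pow_le_div_sqrt {ν ε w0 : ℝ} (hν : 0 ≤ ν) (hε : 0 < ε) (hw0 : 0 < w0)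
    {k : ℕ} (hk : ε ≤ (1 / 2) ^ k * w0 ^ 2) :
    ν / w0 * (√2 ^ k / √2) ≤ ν / √((1 / 2) ^ k * w0 ^ 2 + ε) := by
  have hpow : (√2 ^ k) ^ 2 = 2 ^ k := by rw [← pow_mul, mul_comm, pow_mul, sq_sqrt zero_le_two]
  have hsqrt : √((1 / 2) ^ k * w0 ^ 2 + ε) ≤ w0 * √2 / √2 ^ k := by
    rw [sqrt_le_left (by positivity), div_pow (w0 * √2), mul_pow, sq_sqrt zero_le_two, hpow]
    rw [one_div_pow] at hk ⊢
    have : w0 ^ 2 * 2 / 2 ^ k = 2 * (1 / 2 ^ k * w0 ^ 2) := by ring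
    linarith
  calc ν / w0 * (√2 ^ k / √2) = ν / (w0 * √2 / √2 ^ k) := by field_simp
    _ ≤ ν / √((1 / 2) ^ k * w0 ^ 2 + ε) :=
      div_le_div_of_nonneg_left hν (sqrt_pos.2 (by positivity)) hsqrt

theorem mul_sqrt_two_pow_sub_one_le_sum {ν w0 : ℝ} (hν : 0 ≤ ν) (hw0 : 0 < w0) (τ : ℕ) {τs : ℕ}
    (hτs : 0 < τs) :
    τs * (ν / w0) * (√2 ^ (τ / τs) / √2 - 1) ≤
      ∑ i ∈ range (τ + 1), ν / w0 * (√2 ^ (i / τs) / √2) := by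
  have hs : 1 ≤ √2 := one_le_sqrt.2 one_le_two
  have hs2 : √2 ≤ 2 := sqrt_le_iff.2 ⟨zero_le_two, by norm_num⟩
  calc τs * (ν / w0) * (√2 ^ (τ / τs) / √2 - 1)
      ≤ τs * (ν / w0) * ((√2 ^ (τ / τs) - 1) / √2) := by
        gcongr
        rw [sub_div]
        gcongr
        exact div_le_one_of_le₀ hs (sqrt_nonneg 2)
    _ ≤ τs * (ν / w0) * ((∑ k ∈ range (τ / τs), √2 ^ k) / √2) := by
        gcongr; exact pow_sub_one_le_geom_sum hs hs2 _
    _ = ∑ i ∈ range (τ / τs * τs), ν / w0 * (√2 ^ (i / τs) / √2) := by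
        rw [sum_range_mul_comp_div (fun k => ν / w0 * (√2 ^ k / √2)) _ hτs, nsmul_eq_mul,
          ← mul_sum, ← sum_div]
        ring
    _ ≤ ∑ i ∈ range (τ + 1), ν / w0 * (√2 ^ (i / τs) / √2) :=
        sum_le_sum_of_subset_of_nonneg
          (range_subset_range.2 (Nat.le_succ_of_le (Nat.div_mul_le_self τ τs)))
          fun _ _ _ => by positivity

/-- Doubly exponential decay for Adam weight-decay dynamics: if the positive
sequence contracts with factor 1 - ν/√((1/2)^k w₀² + ε) on each block
kτ* ≤ τ ≤ (k+1)τ*, and ε ≤ (1/2)^k w₀² for the relevant k, then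
w_{τ+1} ≤ exp(-τ*(ν/w₀)(2^{(τ/τ*)/2 - 1} - 1)) w₀. -/
theorem adam_doubly_exponential_decay
    (ν ε w0 : ℝ) (hν : 0 < ν) (hε : 0 < ε) (hw0 : 0 < w0)
    (τs : ℕ) (hτs : 0 < τs)
    (w : ℕ → ℝ) (hinit : w 0 = w0) (hpos : ∀ τ : ℕ, 0 < w τ)
    (τ : ℕ)
    (hrec : ∀ k τ' : ℕ, k * τs ≤ τ' → τ' ≤ (k + 1) * τs →
      w (τ' + 1) ≤ w τ' * (1 - ν / Real.sqrt ((1 / 2 : ℝ) ^ k * w0 ^ 2 + ε)))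
    (hεk : ∀ k : ℕ, k ≤ τ / τs → ε ≤ (1 / 2 : ℝ) ^ k * w0 ^ 2) :
    w (τ + 1) ≤ Real.exp (-(τs : ℝ) * (ν / w0)
        * ((2 : ℝ) ^ (((τ : ℝ) / (τs : ℝ)) / 2 - 1) - 1)) * w0 := by
  have hstep : ∀ t ≤ τ, w (t + 1) ≤ w t * exp (-(ν / w0 * (√2 ^ (t / τs) / √2))) := by
    intro t ht
    have hblock : t ≤ (t / τs + 1) * τs := by
      rw [add_one_mul]; exact (Nat.lt_div_mul_add hτs).le
    exact le_mul_exp_neg_of_le_mul_one_sub (hpos t).le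
      (mul_sqrt_two_pow_le_div_sqrt hν.le hε hw0 (hεk _ (Nat.div_le_div_right ht)))
      (hrec _ t (Nat.div_mul_le_self t τs) hblock)
  have hrate : (τs : ℝ) * (ν / w0) * ((2 : ℝ) ^ (((τ : ℝ) / τs) / 2 - 1) - 1) ≤
      ∑ i ∈ range (τ + 1), ν / w0 * (√2 ^ (i / τs) / √2) :=
    calc (τs : ℝ) * (ν / w0) * ((2 : ℝ) ^ (((τ : ℝ) / τs) / 2 - 1) - 1)
        ≤ τs * (ν / w0) * (√2 ^ (τ / τs) / √2 - 1) := by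
          gcongr; exact two_rpow_le_sqrt_two_pow_div τ hτs
      _ ≤ _ := mul_sqrt_two_pow_sub_one_le_sum hν.le hw0 τ hτs
  calc w (τ + 1) ≤ w 0 * exp (-∑ i ∈ range (τ + 1), ν / w0 * (√2 ^ (i / τs) / √2)) :=
        le_mul_exp_neg_sum τ hstep
    _ ≤ _ := by
        rw [hinit, mul_comm]
        gcongr
        linarith
end

section
/- If the Adam weight-decay sequence w_t converges to a limit w* as t → ∞, then the step size |w_{t+1} - w_t| converges to α·|w*|/√(w*² + ε̃) for ε̃ = ε(1-β₂) (in the limit normalization), and since a convergent sequence has step sizes tending to 0, the limit must satisfy w* = 0. -/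
/-!
Writing the update as `w (t+1) - w t = -c · m_t / √(v_t + ε)`, both exponentially weighted sums
converge when `w` does: by Tannery's theorem, `∑ β^(t-i) u_i → (lim u)/(1-β)`. Hence the steps
converge to `-α w*/√(w*² + ε(1-β₂))`; but the steps of a convergent sequence tend to `0`, and
`α > 0` forces `w* = 0`.
-/

open Filter Finset Topology

lemma tendsto_sum_range_pow_sub_mul {β : ℝ} (hβ0 : 0 ≤ β) (hβ1 : β < 1) {u : ℕ → ℝ} {L : ℝ}
    (hu : Tendsto u atTop (𝓝 L)) :
    Tendsto (fun t : ℕ => ∑ i ∈ range (t + 1), β ^ (t - i) * u i) atTop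
      (𝓝 (L / (1 - β))) := by
  set f : ℕ → ℕ → ℝ := fun t j => if j ≤ t then β ^ j * u (t - j) else 0
  have hsum_eq (t : ℕ) : ∑ i ∈ range (t + 1), β ^ (t - i) * u i = ∑' j, f t j := by
    rw [tsum_eq_sum (s := range (t + 1)) fun j hj => if_neg (by simpa [Nat.lt_succ_iff] using hj),
      ← sum_range_reflect]
    refine sum_congr rfl fun j hj => ?_
    have hjt : j ≤ t := Nat.lt_succ_iff.mp (mem_range.mp hj)
    simp only [if_pos hjt, Nat.sub_sub_self hjt, add_tsub_cancel_right]
  have hlim (j : ℕ) : Tendsto (f · j) atTop (𝓝 (β ^ j * L)) := by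
    refine ((hu.comp (tendsto_sub_atTop_nat j)).const_mul (β ^ j)).congr' ?_
    filter_upwards [eventually_ge_atTop j] with t hjt
    simp only [f, if_pos hjt, Function.comp_apply]
  obtain ⟨C, hC⟩ := isBounded_iff_forall_norm_le.mp (Metric.isBounded_range_of_tendsto u hu)
  have hbound : ∀ᶠ t in atTop, ∀ j, ‖f t j‖ ≤ β ^ j * C := by
    refine Eventually.of_forall fun t j => ?_
    by_cases hjt : j ≤ t
    · simp only [f, if_pos hjt, norm_mul, norm_pow, Real.norm_of_nonneg hβ0]
      exact mul_le_mul_of_nonneg_left (hC _ ⟨_, rfl⟩) (pow_nonneg hβ0 j)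
    · simp only [f, if_neg hjt, norm_zero]
      exact mul_nonneg (pow_nonneg hβ0 j) ((norm_nonneg _).trans (hC _ ⟨0, rfl⟩))
  have hC_sum : Summable fun j => β ^ j * C := (summable_geometric_of_lt_one hβ0 hβ1).mul_right C
  have hgeom : ∑' j, β ^ j * L = L / (1 - β) := by
    rw [tsum_mul_right, tsum_geometric_of_lt_one hβ0 hβ1, inv_mul_eq_div]
  simpa only [hsum_eq, hgeom] using tendsto_tsum_of_dominated_convergence hC_sum hlim hbound

lemma tendsto_succ_sub_of_tendsto {u : ℕ → ℝ} {L : ℝ} (hu : Tendsto u atTop (𝓝 L)) :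
    Tendsto (fun t => u (t + 1) - u t) atTop (𝓝 0) := by
  simpa using (hu.comp (tendsto_add_atTop_nat 1)).sub hu

/-- The left side is the Adam step evaluated at the limits `x/(1-β₁)` of `m_t` and
`x²/(1-β₂)` of `v_t`. -/
lemma adam_step_limit_eq {α β₁ β₂ ε : ℝ} (hβ₁1 : β₁ < 1) (hβ₂1 : β₂ < 1) (hε : 0 < ε) (x : ℝ) :
    α * (1 - β₁) / Real.sqrt (1 - β₂) * (x / (1 - β₁)) / Real.sqrt (x ^ 2 / (1 - β₂) + ε)
      = α * x / Real.sqrt (x ^ 2 + ε * (1 - β₂)) := by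
  have h1β₁ : 1 - β₁ ≠ 0 := by linarith
  have h1β₂ : 0 < 1 - β₂ := by linarith
  have hsqrt : Real.sqrt (x ^ 2 / (1 - β₂) + ε)
      = Real.sqrt (x ^ 2 + ε * (1 - β₂)) / Real.sqrt (1 - β₂) := by
    rw [← Real.sqrt_div' _ h1β₂.le]
    congr 1
    field_simp
  have : 0 < Real.sqrt (x ^ 2 + ε * (1 - β₂)) := Real.sqrt_pos.mpr (by positivity)
  have : 0 < Real.sqrt (1 - β₂) := Real.sqrt_pos.mpr h1β₂
  rw [hsqrt]
  field_simp

/-- If the Adam weight-decay sequence converges to w*, then the step magnitudes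
|w_{t+1} - w_t| converge to α|w*|/√(w*² + ε(1-β₂)); since step sizes of a
convergent sequence tend to 0, the limit must be w* = 0. -/
theorem adam_limit_point_is_zero
    (α β₁ β₂ ε : ℝ) (hα : 0 < α) (hβ₁0 : 0 < β₁) (hβ₁1 : β₁ < 1)
    (hβ₂0 : 0 < β₂) (hβ₂1 : β₂ < 1) (hε : 0 < ε)
    (w : ℕ → ℝ)
    (hw : ∀ t : ℕ, w (t + 1) = w t
        - (α * (1 - β₁) / Real.sqrt (1 - β₂))
          * (∑ i ∈ Finset.range (t + 1), β₁ ^ (t - i) * w i)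
          / Real.sqrt ((∑ i ∈ Finset.range (t + 1), β₂ ^ (t - i) * (w i) ^ 2) + ε))
    (wstar : ℝ)
    (hconv : Filter.Tendsto w Filter.atTop (nhds wstar)) :
    Filter.Tendsto (fun t : ℕ => |w (t + 1) - w t|) Filter.atTop
        (nhds (α * |wstar| / Real.sqrt (wstar ^ 2 + ε * (1 - β₂))))
    ∧ wstar = 0 := by
  have hm := tendsto_sum_range_pow_sub_mul hβ₁0.le hβ₁1 hconv
  have hv := tendsto_sum_range_pow_sub_mul hβ₂0.le hβ₂1 (hconv.pow 2)
  have h1β₂ : 0 < 1 - β₂ := by linarith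
  have hden_ne : Real.sqrt (wstar ^ 2 / (1 - β₂) + ε) ≠ 0 :=
    (Real.sqrt_pos.mpr (by positivity)).ne'
  have hS : 0 < Real.sqrt (wstar ^ 2 + ε * (1 - β₂)) := Real.sqrt_pos.mpr (by positivity)
  have hstep : Tendsto (fun t => w (t + 1) - w t) atTop
      (𝓝 (-(α * wstar / Real.sqrt (wstar ^ 2 + ε * (1 - β₂))))) := by
    rw [← adam_step_limit_eq hβ₁1 hβ₂1 hε]
    refine (((hm.const_mul _).div ((hv.add_const ε).sqrt) hden_ne).neg).congr fun t => ?_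
    rw [Pi.div_apply, hw t]
    ring
  have hlimit : Tendsto (fun t => |w (t + 1) - w t|) atTop
      (𝓝 (α * |wstar| / Real.sqrt (wstar ^ 2 + ε * (1 - β₂)))) := by
    simpa only [abs_neg, abs_div, abs_mul, abs_of_pos hα, abs_of_pos hS] using hstep.abs
  refine ⟨hlimit, ?_⟩
  have hzero := tendsto_nhds_unique hlimit (tendsto_succ_sub_of_tendsto hconv).abs
  simpa [hα.ne', hS.ne'] using hzero
end
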